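/- arXiv:1307.5930 — 3 statements merged into one kernel-verified Lean document; each statement's English description precedes it below -/
import Mathlib

section
/- Let A and B be 3×3 real positive-definite symmetric matrices such that B = R A Rᵀ for some 3×3 real orthogonal matrix R, and suppose A⁻¹ B² A⁻¹ = μ₁ e₁⊗e₁ + e₂⊗e₂ + μ₃ e₃⊗e₃, where e₁, e₂, e₃ ∈ ℝ³ are orthonormal and 0 < μ₁ < 1 < μ₃. Let s ∈ {+1, −1} satisfy s √μ₃ (e₂ · A² e₃) = −(e₂ · A² e₁). Then e₁ · A² e₁ + s √μ₃ (e₃ · A² e₁) > 0, and, setting δ₁ = (2 (e₁ · A² e₁ + s √μ₃ (e₃ · A² e₁)))^(−1/2) and δ₃ = s √μ₃ δ₁, the vector ê = δ₁ A e₁ + δ₃ A e₃ is a unit vector satisfying B = (−I + 2 ê⊗ê) A (−I + 2 ê⊗ê). -/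
/-!
Since `B` is orthogonally similar to `A`, the matrices `B²` and `A²` have the same determinant
and trace. As `A⁻¹B²A⁻¹ = ∑ μᵢ eᵢeᵢᵀ` (with `μ₂ = 1`), the determinant gives `μ₁μ₃ = 1` and the
trace gives `e₁·A²e₁ = μ₃ (e₃·A²e₃)`. Put `t = s√μ₃` and `u = e₁ + t e₃`. The choice of `s` makes
`e₂·A²u = 0`, and then `A²u = c (e₁ + t⁻¹e₃)` with `c = e₁·A²e₁ + t (e₃·A²e₁)`; pairing with `u`
gives `u·A²u = 2c`, so `c > 0` and `|ê|² = 2δ₁²c = 1`. For the rotation `Q` about `ê`,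
`A⁻¹QA = -I + u (e₁ + t⁻¹e₃)ᵀ`, and the product of this matrix with its transpose is `A⁻¹B²A⁻¹`.
Hence `(QAQ)² = QA²Q = B²`, and `QAQ = B` because positive semidefinite square roots are unique.
-/

open Matrix

/-- The 180° rotation matrix `-I + 2 ê⊗ê` for a unit vector `ê`. -/
noncomputable def reflMat (e : Fin 3 → ℝ) : Matrix (Fin 3) (Fin 3) ℝ :=
  -1 + (2 : ℝ) • Matrix.vecMulVec e e

namespace Matrix

variable {m n R : Type*} [CommRing R]

lemma transpose_of_mul_diagonal_mul_of [Fintype m] [DecidableEq m] (v : m → n → R) (c : m → R) :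
    (of v)ᵀ * diagonal c * of v = ∑ i, c i • vecMulVec (v i) (v i) := by
  ext j k
  simp only [mul_apply, transpose_apply, of_apply, diagonal_apply, mul_ite, mul_zero,
    Finset.sum_ite_eq', Finset.mem_univ, ↓reduceIte, sum_apply, smul_apply, vecMulVec_apply,
    smul_eq_mul]
  exact Finset.sum_congr rfl fun _ _ => by ring

section Fintype

variable [Fintype n]

lemma trace_mul_vecMulVec (M : Matrix n n R) (a b : n → R) :
    trace (M * vecMulVec a b) = b ⬝ᵥ M *ᵥ a := by
  rw [mul_vecMulVec, trace_vecMulVec, dotProduct_comm]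

lemma trace_sum_smul_vecMulVec_mul [Fintype m] (v : m → n → R) (c : m → R) (M : Matrix n n R) :
    trace ((∑ i, c i • vecMulVec (v i) (v i)) * M) = ∑ i, c i * (v i ⬝ᵥ M *ᵥ v i) := by
  simp only [Matrix.sum_mul, trace_sum, smul_mul, trace_smul, trace_mul_comm _ M,
    trace_mul_vecMulVec, smul_eq_mul]

lemma dotProduct_mulVec_comm_of_transpose_eq {M : Matrix n n R} (hM : Mᵀ = M) (x y : n → R) :
    x ⬝ᵥ M *ᵥ y = y ⬝ᵥ M *ᵥ x := by
  rw [dotProduct_mulVec, ← mulVec_transpose, hM, dotProduct_comm]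

variable [DecidableEq n]

lemma neg_one_add_vecMulVec_mul_transpose (u v : n → R) :
    (-1 + vecMulVec u v) * (-1 + vecMulVec u v)ᵀ
      = 1 - vecMulVec u v - vecMulVec v u + (v ⬝ᵥ v) • vecMulVec u u := by
  rw [transpose_add, transpose_neg, transpose_one, transpose_vecMulVec]
  simp only [add_mul, mul_add, neg_mul, mul_neg, one_mul, mul_one,
    vecMulVec_mul_vecMulVec, vecMulVec_smul]
  abel

section Frame

variable {v : n → n → R}

lemma sum_vecMulVec_self_eq_one (hv : of v * (of v)ᵀ = 1) :
    ∑ i, vecMulVec (v i) (v i) = 1 := by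
  have h := transpose_of_mul_diagonal_mul_of v 1
  simp only [Pi.one_apply, one_smul, Pi.one_def, diagonal_one, Matrix.mul_one] at h
  rw [← h, mul_eq_one_comm.mp hv]

lemma sum_dotProduct_smul_eq (hv : of v * (of v)ᵀ = 1) (x : n → R) :
    ∑ i, (v i ⬝ᵥ x) • v i = x := by
  simpa [Matrix.sum_mulVec, vecMulVec_mulVec] using
    congrArg (· *ᵥ x) (sum_vecMulVec_self_eq_one hv)

lemma trace_eq_sum_dotProduct_mulVec (hv : of v * (of v)ᵀ = 1) (M : Matrix n n R) :
    trace M = ∑ i, v i ⬝ᵥ M *ᵥ v i := by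
  simpa [sum_vecMulVec_self_eq_one hv] using trace_sum_smul_vecMulVec_mul v 1 M

lemma det_sum_smul_vecMulVec_self (hv : of v * (of v)ᵀ = 1) (c : n → R) :
    det (∑ i, c i • vecMulVec (v i) (v i)) = ∏ i, c i := by
  have h : det (of v) * det (of v) = 1 := by
    simpa [det_mul, det_transpose] using congrArg det hv
  rw [← transpose_of_mul_diagonal_mul_of, det_mul, det_mul, det_transpose, det_diagonal]
  linear_combination (∏ i, c i) * h

end Frame

section Orthogonal

variable {Q A B C : Matrix n n R}

lemma det_mul_mul_transpose (hQ : Q * Qᵀ = 1) (M : Matrix n n R) :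
    det (Q * M * Qᵀ) = det M := by
  have h : det Q * det Q = 1 := by simpa [det_mul, det_transpose] using congrArg det hQ
  rw [det_mul, det_mul, det_transpose]
  linear_combination det M * h

lemma trace_mul_mul_transpose (hQ : Q * Qᵀ = 1) (M : Matrix n n R) :
    trace (Q * M * Qᵀ) = trace M := by
  rw [trace_mul_cycle, mul_eq_one_comm.mp hQ, Matrix.one_mul]

lemma mul_mul_transpose_mul_self (hQ : Q * Qᵀ = 1) (M : Matrix n n R) :
    Q * M * Qᵀ * (Q * M * Qᵀ) = Q * (M * M) * Qᵀ := by
  simp only [Matrix.mul_assoc]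
  rw [← Matrix.mul_assoc Qᵀ, mul_eq_one_comm.mp hQ, Matrix.one_mul]

lemma det_eq_one_of_mul_self_eq (hA : IsUnit A.det) (hQ : Q * Qᵀ = 1) (hB : B = Q * A * Qᵀ)
    (hC : B * B = A * C * A) : det C = 1 := by
  have h := congrArg det hC
  rw [hB, det_mul, det_mul_mul_transpose hQ, det_mul, det_mul] at h
  exact (hA.mul hA).mul_left_cancel (by linear_combination -h)

lemma trace_mul_eq_of_mul_self_eq (hQ : Q * Qᵀ = 1) (hB : B = Q * A * Qᵀ)
    (hC : B * B = A * C * A) : trace (C * (A * A)) = trace (A * A) :=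
  calc trace (C * (A * A)) = trace (A * C * A) := by
        rw [Matrix.mul_assoc, trace_mul_comm A, Matrix.mul_assoc]
    _ = trace (Q * (A * A) * Qᵀ) := by rw [← hC, hB, mul_mul_transpose_mul_self hQ]
    _ = trace (A * A) := trace_mul_mul_transpose hQ _

end Orthogonal

lemma eq_mul_mul_of_inv_mul_mul_inv_eq {A M N : Matrix n n R} (hA : IsUnit A.det)
    (h : A⁻¹ * M * A⁻¹ = N) : M = A * N * A := by
  rw [← h, Matrix.mul_assoc, nonsing_inv_mul_cancel_right _ _ hA,
    mul_nonsing_inv_cancel_left _ _ hA]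

end Fintype

end Matrix

lemma conj_eq_of_inv_mul_mul_transpose {n : Type*} [Fintype n] [DecidableEq n]
    {A B Q : Matrix n n ℝ} (hA : A.PosDef) (hB : B.PosSemidef) (hQt : Qᵀ = Q) (hQQ : Q * Q = 1)
    (h : (A⁻¹ * Q * A) * (A⁻¹ * Q * A)ᵀ = A⁻¹ * (B * B) * A⁻¹) : Q * A * Q = B := by
  have hAt : Aᵀ = A := hA.isHermitian
  have hdet : IsUnit A.det := (isUnit_iff_isUnit_det A).mp hA.isUnit
  have hsq : Q * A * Q * (Q * A * Q) = B * B := by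
    have h' := eq_mul_mul_of_inv_mul_mul_inv_eq hdet h.symm
    simp only [transpose_mul, transpose_nonsing_inv, hAt, hQt, Matrix.mul_assoc,
      mul_nonsing_inv_cancel_left _ _ hdet, nonsing_inv_mul _ hdet, Matrix.mul_one] at h'
    rw [h']
    simp only [Matrix.mul_assoc]
    rw [← Matrix.mul_assoc Q Q, hQQ, Matrix.one_mul]
  have hQAQ : (Q * A * Q).PosSemidef := by
    simpa [hQt] using hA.posSemidef.mul_mul_conjTranspose_same Q
  -- positive semidefinite square roots are unique
  open scoped MatrixOrder Matrix.Norms.L2Operator in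
  exact (CFC.mul_self_eq_mul_self_iff _ _ hQAQ.nonneg hB.nonneg).mp hsq

section OrthonormalTriple

variable {e1 e2 e3 : Fin 3 → ℝ}

lemma of_vecCons_mul_transpose_eq_one (he1 : e1 ⬝ᵥ e1 = 1) (he2 : e2 ⬝ᵥ e2 = 1)
    (he3 : e3 ⬝ᵥ e3 = 1) (h12 : e1 ⬝ᵥ e2 = 0) (h13 : e1 ⬝ᵥ e3 = 0) (h23 : e2 ⬝ᵥ e3 = 0) :
    of ![e1, e2, e3] * (of ![e1, e2, e3])ᵀ = 1 := by
  ext i j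
  change ![e1, e2, e3] i ⬝ᵥ ![e1, e2, e3] j = _
  fin_cases i <;> fin_cases j <;>
    simp [he1, he2, he3, h12, h13, h23, dotProduct_comm e2 e1, dotProduct_comm e3 e1,
      dotProduct_comm e3 e2]

lemma sum_fin_three_smul_vecMulVec (c : Fin 3 → ℝ) :
    ∑ i, c i • vecMulVec (![e1, e2, e3] i) (![e1, e2, e3] i)
      = c 0 • vecMulVec e1 e1 + c 1 • vecMulVec e2 e2 + c 2 • vecMulVec e3 e3 := by
  simp [Fin.sum_univ_three]

variable {A B Q : Matrix (Fin 3) (Fin 3) ℝ} {μ1 μ3 : ℝ}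

lemma mul_eq_one_of_mul_self_eq (hA : IsUnit A.det) (hQ : Q * Qᵀ = 1) (hB : B = Q * A * Qᵀ)
    (hF : of ![e1, e2, e3] * (of ![e1, e2, e3])ᵀ = 1)
    (hC : B * B = A * (μ1 • vecMulVec e1 e1 + vecMulVec e2 e2 + μ3 • vecMulVec e3 e3) * A) :
    μ1 * μ3 = 1 := by
  have h := det_sum_smul_vecMulVec_self hF ![μ1, 1, μ3]
  rw [sum_fin_three_smul_vecMulVec, det_eq_one_of_mul_self_eq hA hQ hB (by simpa using hC)] at h
  simpa [Fin.prod_univ_three] using h.symm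

lemma dotProduct_mulVec_eq_of_mul_self_eq (hA : IsUnit A.det) (hQ : Q * Qᵀ = 1)
    (hB : B = Q * A * Qᵀ) (hF : of ![e1, e2, e3] * (of ![e1, e2, e3])ᵀ = 1) (hμ3 : μ3 ≠ 1)
    (hC : B * B = A * (μ1 • vecMulVec e1 e1 + vecMulVec e2 e2 + μ3 • vecMulVec e3 e3) * A) :
    e1 ⬝ᵥ (A * A) *ᵥ e1 = μ3 * (e3 ⬝ᵥ (A * A) *ᵥ e3) := by
  have hμ := mul_eq_one_of_mul_self_eq hA hQ hB hF hC
  have h := trace_mul_eq_of_mul_self_eq hQ hB (C := ∑ i, ![μ1, 1, μ3] i • _) (by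
    rw [sum_fin_three_smul_vecMulVec]; simpa using hC)
  rw [trace_sum_smul_vecMulVec_mul, trace_eq_sum_dotProduct_mulVec hF] at h
  simp only [Fin.sum_univ_three, Matrix.cons_val_zero, Matrix.cons_val_one, Matrix.cons_val_two,
    Matrix.head_cons, Matrix.tail_cons, one_mul] at h
  have h' : (μ3 - 1) * (e1 ⬝ᵥ (A * A) *ᵥ e1 - μ3 * (e3 ⬝ᵥ (A * A) *ᵥ e3)) = 0 := by
    linear_combination (-μ3) * h + (e1 ⬝ᵥ (A * A) *ᵥ e1) * hμ
  linarith [(mul_eq_zero.mp h').resolve_left (sub_ne_zero.mpr hμ3)]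

lemma mulVec_add_smul_eq_smul {S : Matrix (Fin 3) (Fin 3) ℝ} (hS : Sᵀ = S)
    (hF : of ![e1, e2, e3] * (of ![e1, e2, e3])ᵀ = 1) {t : ℝ} (ht : t ≠ 0)
    (h11 : e1 ⬝ᵥ S *ᵥ e1 = t ^ 2 * (e3 ⬝ᵥ S *ᵥ e3))
    (h2 : t * (e2 ⬝ᵥ S *ᵥ e3) = -(e2 ⬝ᵥ S *ᵥ e1)) :
    S *ᵥ (e1 + t • e3) = (e1 ⬝ᵥ S *ᵥ e1 + t * (e3 ⬝ᵥ S *ᵥ e1)) • (e1 + t⁻¹ • e3) := by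
  rw [mulVec_add, mulVec_smul, ← sum_dotProduct_smul_eq hF (S *ᵥ e1 + t • S *ᵥ e3),
    Fin.sum_univ_three]
  simp only [Matrix.cons_val_zero, Matrix.cons_val_one, Matrix.cons_val_two,
    Matrix.head_cons, Matrix.tail_cons, dotProduct_add, dotProduct_smul, smul_eq_mul,
    dotProduct_mulVec_comm_of_transpose_eq hS e1 e3]
  rw [show e2 ⬝ᵥ S *ᵥ e1 + t * (e2 ⬝ᵥ S *ᵥ e3) = 0 by linarith,
    show e3 ⬝ᵥ S *ᵥ e1 + t * (e3 ⬝ᵥ S *ᵥ e3)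
      = t⁻¹ * (e1 ⬝ᵥ S *ᵥ e1 + t * (e3 ⬝ᵥ S *ᵥ e1)) by field_simp; linear_combination -h11]
  module

lemma neg_one_add_vecMulVec_mul_transpose_eq (hF : of ![e1, e2, e3] * (of ![e1, e2, e3])ᵀ = 1)
    (he1 : e1 ⬝ᵥ e1 = 1) (he3 : e3 ⬝ᵥ e3 = 1) (h13 : e1 ⬝ᵥ e3 = 0) {t : ℝ} (ht : t ≠ 0)
    (hμ : μ1 * t ^ 2 = 1) :
    (-1 + vecMulVec (e1 + t • e3) (e1 + t⁻¹ • e3)) *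
        (-1 + vecMulVec (e1 + t • e3) (e1 + t⁻¹ • e3))ᵀ
      = μ1 • vecMulVec e1 e1 + vecMulVec e2 e2 + t ^ 2 • vecMulVec e3 e3 := by
  have hnorm : (e1 + t⁻¹ • e3) ⬝ᵥ (e1 + t⁻¹ • e3) = 1 + t⁻¹ ^ 2 := by
    simp only [dotProduct_add, add_dotProduct, dotProduct_smul, smul_dotProduct, he1, he3, h13,
      dotProduct_comm e3 e1, smul_eq_mul]
    ring
  obtain rfl : μ1 = t⁻¹ ^ 2 := by field_simp; linear_combination hμ
  rw [neg_one_add_vecMulVec_mul_transpose, hnorm, ← sum_vecMulVec_self_eq_one hF,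
    Fin.sum_univ_three]
  simp only [Matrix.cons_val_zero, Matrix.cons_val_one, Matrix.cons_val_two, Matrix.head_cons,
    Matrix.tail_cons, vecMulVec_add, add_vecMulVec, vecMulVec_smul, smul_vecMulVec]
  match_scalars <;> field_simp <;> ring

lemma add_smul_dotProduct_add_inv_smul (he1 : e1 ⬝ᵥ e1 = 1) (he3 : e3 ⬝ᵥ e3 = 1)
    (h13 : e1 ⬝ᵥ e3 = 0) {t : ℝ} (ht : t ≠ 0) : (e1 + t • e3) ⬝ᵥ (e1 + t⁻¹ • e3) = 2 := by
  simp only [dotProduct_add, add_dotProduct, dotProduct_smul, smul_dotProduct, he1, he3, h13,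
    dotProduct_comm e3 e1, smul_eq_mul]
  field_simp
  ring

end OrthonormalTriple

section Reflection

lemma reflMat_transpose (e : Fin 3 → ℝ) : (reflMat e)ᵀ = reflMat e := by
  rw [reflMat, transpose_add, transpose_neg, transpose_one, transpose_smul, transpose_vecMulVec]

lemma reflMat_mul_self {e : Fin 3 → ℝ} (he : e ⬝ᵥ e = 1) : reflMat e * reflMat e = 1 := by
  simp only [reflMat, add_mul, mul_add, neg_mul, mul_neg, one_mul, mul_one, Matrix.smul_mul,
    Matrix.mul_smul, vecMulVec_mul_vecMulVec, he, one_smul, smul_smul]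
  module

lemma inv_mul_reflMat_mul {A : Matrix (Fin 3) (Fin 3) ℝ} (hAt : Aᵀ = A) (hA : IsUnit A.det)
    (e : Fin 3 → ℝ) : A⁻¹ * reflMat e * A = -1 + (2 : ℝ) • vecMulVec (A⁻¹ *ᵥ e) (A *ᵥ e) := by
  rw [reflMat, Matrix.mul_add, Matrix.add_mul, Matrix.mul_smul, Matrix.smul_mul, mul_vecMulVec,
    vecMulVec_mul, ← mulVec_transpose, hAt]
  simp [nonsing_inv_mul A hA]

variable {A : Matrix (Fin 3) (Fin 3) ℝ} {u v : Fin 3 → ℝ} {c δ : ℝ}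

lemma pos_of_mulVec_eq_smul (hA : A.PosDef) (hu : u ≠ 0) (huv : u ⬝ᵥ v = 2)
    (hAu : (A * A) *ᵥ u = c • v) : 0 < c := by
  have hAA : (A * A).PosDef := by
    have h := PosDef.conjTranspose_mul_self A (mulVec_injective_iff_isUnit.mpr hA.isUnit)
    rwa [hA.isHermitian.eq] at h
  have h := hAA.dotProduct_mulVec_pos hu
  rw [star_trivial, hAu, dotProduct_smul, huv, smul_eq_mul] at h
  linarith

lemma smul_mulVec_dotProduct_self (hAt : Aᵀ = A) (huv : u ⬝ᵥ v = 2)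
    (hAu : (A * A) *ᵥ u = c • v) (hδ : 2 * δ ^ 2 * c = 1) :
    (δ • A *ᵥ u) ⬝ᵥ (δ • A *ᵥ u) = 1 := by
  rw [dotProduct_smul, smul_dotProduct, dotProduct_mulVec, vecMul_mulVec, hAt,
    ← dotProduct_mulVec, hAu, dotProduct_smul, huv]
  simp only [smul_eq_mul]
  linear_combination hδ

lemma inv_mul_reflMat_smul_mulVec_mul (hAt : Aᵀ = A) (hA : IsUnit A.det)
    (hAu : (A * A) *ᵥ u = c • v) (hδ : 2 * δ ^ 2 * c = 1) :
    A⁻¹ * reflMat (δ • A *ᵥ u) * A = -1 + vecMulVec u v := by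
  rw [inv_mul_reflMat_mul hAt hA, mulVec_smul, mulVec_smul, mulVec_mulVec, mulVec_mulVec,
    nonsing_inv_mul A hA, one_mulVec, hAu, smul_smul, smul_vecMulVec, vecMulVec_smul, smul_smul,
    smul_smul, show 2 * δ * (δ * c) = 1 by linear_combination hδ, one_smul]

end Reflection

theorem stmt_16_general (A B : Matrix (Fin 3) (Fin 3) ℝ) (hA : A.PosDef) (hB : B.PosDef)
    (R : Matrix (Fin 3) (Fin 3) ℝ) (hR : R * Rᵀ = 1) (hBA : B = R * A * Rᵀ)
    (μ1 μ3 : ℝ) (e1 e2 e3 : Fin 3 → ℝ)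
    (he1 : e1 ⬝ᵥ e1 = 1) (he2 : e2 ⬝ᵥ e2 = 1) (he3 : e3 ⬝ᵥ e3 = 1)
    (h12 : e1 ⬝ᵥ e2 = 0) (h13 : e1 ⬝ᵥ e3 = 0) (h23 : e2 ⬝ᵥ e3 = 0)
    (hμ3 : 1 < μ3)
    (hdecomp : A⁻¹ * (B * B) * A⁻¹
      = μ1 • Matrix.vecMulVec e1 e1 + Matrix.vecMulVec e2 e2
        + μ3 • Matrix.vecMulVec e3 e3)
    (s : ℝ) (hs : s = 1 ∨ s = -1)
    (hseq : s * Real.sqrt μ3 * (e2 ⬝ᵥ (A * A).mulVec e3)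
      = -(e2 ⬝ᵥ (A * A).mulVec e1))
    (δ1 δ3 : ℝ)
    (hδ1 : δ1 = (Real.sqrt (2 * (e1 ⬝ᵥ (A * A).mulVec e1
        + s * Real.sqrt μ3 * (e3 ⬝ᵥ (A * A).mulVec e1))))⁻¹)
    (hδ3 : δ3 = s * Real.sqrt μ3 * δ1)
    (ehat : Fin 3 → ℝ) (hehat : ehat = δ1 • A.mulVec e1 + δ3 • A.mulVec e3) :
    0 < e1 ⬝ᵥ (A * A).mulVec e1 + s * Real.sqrt μ3 * (e3 ⬝ᵥ (A * A).mulVec e1) ∧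
    ehat ⬝ᵥ ehat = 1 ∧
    B = reflMat ehat * A * reflMat ehat := by
  have hAt : Aᵀ = A := hA.isHermitian
  have hdet : IsUnit A.det := (isUnit_iff_isUnit_det A).mp hA.isUnit
  have hF := of_vecCons_mul_transpose_eq_one he1 he2 he3 h12 h13 h23
  have hC := eq_mul_mul_of_inv_mul_mul_inv_eq hdet hdecomp
  have ht2 : (s * √μ3) ^ 2 = μ3 := by
    rw [mul_pow, Real.sq_sqrt (by linarith)]
    rcases hs with rfl | rfl <;> norm_num
  set t := s * √μ3
  have ht : t ≠ 0 := fun h => by rw [h] at ht2; linarith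
  have hAu := mulVec_add_smul_eq_smul (S := A * A) (by rw [transpose_mul, hAt]) hF ht
    (ht2 ▸ dotProduct_mulVec_eq_of_mul_self_eq hdet hR hBA hF hμ3.ne' hC) hseq
  have hu : e1 + t • e3 ≠ 0 := fun h => by simpa [he1, h13] using congrArg (e1 ⬝ᵥ ·) h
  have huv := add_smul_dotProduct_add_inv_smul he1 he3 h13 ht
  have hc := pos_of_mulVec_eq_smul hA hu huv hAu
  have hδ : 2 * δ1 ^ 2 * (e1 ⬝ᵥ (A * A) *ᵥ e1 + t * (e3 ⬝ᵥ (A * A) *ᵥ e1)) = 1 := by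
    rw [hδ1, inv_pow, Real.sq_sqrt (by linarith)]
    field_simp
  have hehat' : ehat = δ1 • A *ᵥ (e1 + t • e3) := by
    rw [hehat, hδ3, mulVec_add, mulVec_smul, smul_add, smul_smul, mul_comm]
  have hunit : ehat ⬝ᵥ ehat = 1 := hehat' ▸ smul_mulVec_dotProduct_self hAt huv hAu hδ
  refine ⟨hc, hunit, (conj_eq_of_inv_mul_mul_transpose hA hB.posSemidef (reflMat_transpose _)
    (reflMat_mul_self hunit) ?_).symm⟩
  rw [hehat', inv_mul_reflMat_smul_mulVec_mul hAt hdet hAu hδ, hdecomp, ← ht2,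
    neg_one_add_vecMulVec_mul_transpose_eq hF he1 he3 h13 ht
      (ht2 ▸ mul_eq_one_of_mul_self_eq hdet hR hBA hF hC)]

theorem stmt_16 (A B : Matrix (Fin 3) (Fin 3) ℝ) (hA : A.PosDef) (hB : B.PosDef)
    (R : Matrix (Fin 3) (Fin 3) ℝ) (hR : R * Rᵀ = 1) (hBA : B = R * A * Rᵀ)
    (μ1 μ3 : ℝ) (e1 e2 e3 : Fin 3 → ℝ)
    (he1 : e1 ⬝ᵥ e1 = 1) (he2 : e2 ⬝ᵥ e2 = 1) (he3 : e3 ⬝ᵥ e3 = 1)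
    (h12 : e1 ⬝ᵥ e2 = 0) (h13 : e1 ⬝ᵥ e3 = 0) (h23 : e2 ⬝ᵥ e3 = 0)
    (hμ1 : 0 < μ1) (hμ1' : μ1 < 1) (hμ3 : 1 < μ3)
    (hdecomp : A⁻¹ * (B * B) * A⁻¹
      = μ1 • Matrix.vecMulVec e1 e1 + Matrix.vecMulVec e2 e2
        + μ3 • Matrix.vecMulVec e3 e3)
    (s : ℝ) (hs : s = 1 ∨ s = -1)
    (hseq : s * Real.sqrt μ3 * (e2 ⬝ᵥ (A * A).mulVec e3)
      = -(e2 ⬝ᵥ (A * A).mulVec e1))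
    (δ1 δ3 : ℝ)
    (hδ1 : δ1 = (Real.sqrt (2 * (e1 ⬝ᵥ (A * A).mulVec e1
        + s * Real.sqrt μ3 * (e3 ⬝ᵥ (A * A).mulVec e1))))⁻¹)
    (hδ3 : δ3 = s * Real.sqrt μ3 * δ1)
    (ehat : Fin 3 → ℝ) (hehat : ehat = δ1 • A.mulVec e1 + δ3 • A.mulVec e3) :
    0 < e1 ⬝ᵥ (A * A).mulVec e1 + s * Real.sqrt μ3 * (e3 ⬝ᵥ (A * A).mulVec e1) ∧
    ehat ⬝ᵥ ehat = 1 ∧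
    B = reflMat ehat * A * reflMat ehat :=
  stmt_16_general A B hA hB R hR hBA μ1 μ3 e1 e2 e3 he1 he2 he3 h12 h13 h23 hμ3 hdecomp s hs hseq δ1
    δ3 hδ1 hδ3 ehat hehat
end

section
/- Let U be a 3×3 real positive-definite symmetric matrix, Q a 3×3 real orthogonal matrix, and Û = Q U Qᵀ. Suppose there exist R̂ ∈ SO(3) and vectors a, n ∈ ℝ³ with R̂ Û = U + a ⊗ n. Then n · (U⁻¹ a) = 0 and 2 n · (U a) + |a|² |n|² = 0. -/
/-!
Compare both sides of `R̂ Û = U + a ⊗ n` through two invariants. Determinants: `det R̂ = 1` and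
conjugation by `Q` preserves `det U`, while the matrix determinant lemma gives
`det (U + a ⊗ n) = det U · (1 + n · U⁻¹ a)`. Squared Frobenius norms `tr (Mᵀ M)`: neither `R̂` nor
conjugation by `Q` changes them, and expanding `tr ((U + a ⊗ n)ᵀ (U + a ⊗ n))` with `U` symmetric
yields `tr (Uᵀ U) + 2 n · U a + |a|² |n|²`.
-/

open Matrix

/-- Membership in SO(3): orthogonal with determinant 1. -/
def SO3 (R : Matrix (Fin 3) (Fin 3) ℝ) : Prop := R * Rᵀ = 1 ∧ R.det = 1

namespace Matrix

variable {m n R : Type*} [Fintype m] [CommRing R]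

theorem trace_transpose_mul_self_add_vecMulVec (A : Matrix m m R) (u v : m → R) :
    ((A + vecMulVec u v)ᵀ * (A + vecMulVec u v)).trace
      = (Aᵀ * A).trace + 2 * (u ⬝ᵥ A *ᵥ v) + (u ⬝ᵥ u) * (v ⬝ᵥ v) := by
  rw [transpose_add, transpose_vecMulVec, add_mul, mul_add, mul_add, trace_add, trace_add,
    trace_add, mul_vecMulVec, vecMulVec_mul, vecMulVec_mul_vecMulVec, trace_vecMulVec,
    trace_vecMulVec, trace_vecMulVec, mulVec_transpose, ← dotProduct_mulVec, dotProduct_comm v,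
    ← dotProduct_mulVec, dotProduct_smul, smul_eq_mul]
  ring

variable [DecidableEq m]

theorem det_add_vecMulVec {A : Matrix m m R} (hA : IsUnit A.det) (u v : m → R) :
    (A + vecMulVec u v).det = A.det * (1 + v ⬝ᵥ A⁻¹ *ᵥ u) := by
  rw [vecMulVec_eq Unit, det_add_replicateCol_mul_replicateRow hA, Matrix.mul_assoc,
    ← replicateCol_mulVec, det_unique (1 + _), add_apply, one_apply_eq,
    replicateRow_mul_replicateCol_apply]

theorem transpose_mul_self_of_transpose_mul_eq_one {Q : Matrix m m R} (hQ : Qᵀ * Q = 1)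
    (A : Matrix m n R) : (Q * A)ᵀ * (Q * A) = Aᵀ * A := by
  rw [transpose_mul, Matrix.mul_assoc, ← Matrix.mul_assoc Qᵀ, hQ, Matrix.one_mul]

theorem trace_transpose_mul_self_conj {Q : Matrix m m R} (hQ : Qᵀ * Q = 1) (A : Matrix m m R) :
    ((Q * A * Qᵀ)ᵀ * (Q * A * Qᵀ)).trace = (Aᵀ * A).trace := by
  rw [Matrix.mul_assoc, transpose_mul_self_of_transpose_mul_eq_one hQ, transpose_mul,
    transpose_transpose, ← Matrix.mul_assoc, trace_mul_comm, ← Matrix.mul_assoc,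
    ← Matrix.mul_assoc, hQ, Matrix.one_mul]

theorem det_conj_of_mul_transpose_eq_one {Q : Matrix m m R} (hQ : Q * Qᵀ = 1)
    (A : Matrix m m R) : (Q * A * Qᵀ).det = A.det := by
  have hdetQ : Q.det * Q.det = 1 := by
    simpa only [det_mul, det_transpose, det_one] using congrArg det hQ
  rw [det_mul, det_mul, det_transpose]
  linear_combination A.det * hdetQ

end Matrix

theorem stmt_18 (U Q Uhat : Matrix (Fin 3) (Fin 3) ℝ)
    (hU : U.PosDef) (hQ : Q * Qᵀ = 1) (hUhat : Uhat = Q * U * Qᵀ)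
    (Rhat : Matrix (Fin 3) (Fin 3) ℝ) (hRhat : SO3 Rhat)
    (a n : Fin 3 → ℝ)
    (hcomp : Rhat * Uhat = U + Matrix.vecMulVec a n) :
    n ⬝ᵥ U⁻¹.mulVec a = 0 ∧
    2 * (n ⬝ᵥ U.mulVec a) + (a ⬝ᵥ a) * (n ⬝ᵥ n) = 0 := by
  have hdetU : IsUnit U.det := hU.det_pos.ne'.isUnit
  have hdet : U.det * (1 + n ⬝ᵥ U⁻¹ *ᵥ a) = U.det * 1 := by
    rw [← det_add_vecMulVec hdetU, ← hcomp, det_mul, hRhat.2, one_mul, hUhat,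
      det_conj_of_mul_transpose_eq_one hQ, mul_one]
  have htrace : (Uᵀ * U).trace + 2 * (a ⬝ᵥ U *ᵥ n) + (a ⬝ᵥ a) * (n ⬝ᵥ n) = (Uᵀ * U).trace := by
    rw [← trace_transpose_mul_self_add_vecMulVec, ← hcomp,
      transpose_mul_self_of_transpose_mul_eq_one (mul_eq_one_comm.mp hRhat.1), hUhat,
      trace_transpose_mul_self_conj (mul_eq_one_comm.mp hQ)]
  have hsymm : a ⬝ᵥ U *ᵥ n = n ⬝ᵥ U *ᵥ a := by
    rw [dotProduct_mulVec, ← mulVec_transpose,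
      (conjTranspose_eq_transpose_of_trivial U).symm.trans hU.isHermitian, dotProduct_comm]
  exact ⟨by linarith [mul_left_cancel₀ hdetU.ne_zero hdet], by linarith⟩
end

section
/- Let U be a 3×3 real positive-definite symmetric matrix and let a, n ∈ ℝ³ satisfy n · (U⁻¹ a) = 0 and 2 n · (U a) + |a|² |n|² = 0. Fix f ∈ ℝ and set C(f) = (U + f n⊗a)(U + f a⊗n). Then det C(f) = det(U²), and if the eigenvalues of C(f), counted with multiplicity, are 1, p, q, then p q = det(U²) and (1 − p)(q − 1) = tr(U²) − det(U²) + (f² − f) |a|² |n|² − 2. -/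
open Matrix Polynomial

/-!
Both factors of `C(f)` are rank-one perturbations of `U`, so by the matrix determinant lemma
`det (U + f n⊗a) = det U (1 + f a·U⁻¹n)` and `det (U + f a⊗n) = det U (1 + f n·U⁻¹a)`; as `U⁻¹` is
symmetric, both correction terms vanish by the first hypothesis. Expanding the trace,
`tr C(f) = tr U² + 2f n·Ua + f²|a|²|n|²`, and the second hypothesis turns `2f n·Ua` into
`-f|a|²|n|²`. Finally, when the characteristic polynomial is `(X - 1)(X - p)(X - q)` the determinant
is `pq` and the trace is `1 + p + q`.
-/

theorem Polynomial.splits_multiset_prod_X_sub_C {R : Type*} [CommRing R] (s : Multiset R) :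
    (s.map fun a => X - C a).prod.Splits :=
  Splits.multisetProd (by simp [Splits.X_sub_C])

namespace Matrix

variable {m : Type*} [Fintype m]

section CommSemiring

variable {R : Type*} [CommSemiring R]

theorem IsSymm.dotProduct_mulVec_comm {A : Matrix m m R} (hA : A.IsSymm) (u v : m → R) :
    u ⬝ᵥ A *ᵥ v = v ⬝ᵥ A *ᵥ u := by
  rw [dotProduct_mulVec, ← mulVec_transpose, hA.eq, dotProduct_comm]

theorem trace_add_smul_vecMulVec_mul_add_smul_vecMulVec {A : Matrix m m R} (hA : A.IsSymm)
    (r : R) (u v : m → R) :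
    ((A + r • vecMulVec v u) * (A + r • vecMulVec u v)).trace
      = (A * A).trace + 2 * r * (v ⬝ᵥ A *ᵥ u) + r ^ 2 * (u ⬝ᵥ u) * (v ⬝ᵥ v) := by
  simp only [add_mul, mul_add, Matrix.smul_mul, Matrix.mul_smul, smul_smul,
    vecMulVec_mul_vecMulVec, trace_add, trace_smul]
  simp only [mul_vecMulVec, vecMulVec_mul, trace_vecMulVec, smul_eq_mul, dotProduct_smul]
  rw [← mulVec_transpose, hA.eq, dotProduct_comm (A *ᵥ u)]
  ring

end CommSemiring

variable [DecidableEq m] {R : Type*} [CommRing R]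

theorem det_add_smul_vecMulVec {A : Matrix m m R} (hA : IsUnit A.det) (r : R) (u v : m → R) :
    (A + r • vecMulVec u v).det = A.det * (1 + r * (v ⬝ᵥ A⁻¹ *ᵥ u)) := by
  rw [← smul_vecMulVec, vecMulVec_eq Unit, det_add_replicateCol_mul_replicateRow hA,
    Matrix.mul_assoc, ← replicateCol_mulVec, det_unique (n := Unit), Matrix.add_apply, one_apply_eq,
    replicateRow_mul_replicateCol_apply, mulVec_smul, dotProduct_smul, smul_eq_mul]

variable [IsDomain R]

theorem det_eq_prod_of_charpoly_eq {A : Matrix m m R} {s : Multiset R}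
    (h : A.charpoly = (s.map fun a => X - C a).prod) : A.det = s.prod := by
  rw [det_eq_prod_roots_charpoly_of_splits (h ▸ splits_multiset_prod_X_sub_C s), h, roots_multiset_prod_X_sub_C]

theorem trace_eq_sum_of_charpoly_eq {A : Matrix m m R} {s : Multiset R}
    (h : A.charpoly = (s.map fun a => X - C a).prod) : A.trace = s.sum := by
  rw [trace_eq_sum_roots_charpoly_of_splits (h ▸ splits_multiset_prod_X_sub_C s), h, roots_multiset_prod_X_sub_C]

end Matrix

theorem stmt_19 (U : Matrix (Fin 3) (Fin 3) ℝ) (hU : U.PosDef)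
    (a n : Fin 3 → ℝ)
    (h1 : n ⬝ᵥ U⁻¹.mulVec a = 0)
    (h2 : 2 * (n ⬝ᵥ U.mulVec a) + (a ⬝ᵥ a) * (n ⬝ᵥ n) = 0)
    (f : ℝ) :
    ((U + f • Matrix.vecMulVec n a) * (U + f • Matrix.vecMulVec a n)).det
      = (U * U).det ∧
    ∀ p q : ℝ,
      ((U + f • Matrix.vecMulVec n a) * (U + f • Matrix.vecMulVec a n)).charpoly
        = (X - C 1) * (X - C p) * (X - C q) →
      p * q = (U * U).det ∧
      (1 - p) * (q - 1)
        = (U * U).trace - (U * U).det + (f ^ 2 - f) * (a ⬝ᵥ a) * (n ⬝ᵥ n) - 2 := by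
  have hUsymm : U.IsSymm := isHermitian_iff_isSymm.mp hU.isHermitian
  have hUdet : IsUnit U.det := hU.det_pos.ne'.isUnit
  have h1' : a ⬝ᵥ U⁻¹ *ᵥ n = 0 := hUsymm.inv.dotProduct_mulVec_comm a n ▸ h1
  have hdet : ((U + f • vecMulVec n a) * (U + f • vecMulVec a n)).det = (U * U).det := by
    rw [det_mul, det_mul, det_add_smul_vecMulVec hUdet, det_add_smul_vecMulVec hUdet, h1, h1']
    ring
  have htrace : ((U + f • vecMulVec n a) * (U + f • vecMulVec a n)).trace
      = (U * U).trace + (f ^ 2 - f) * (a ⬝ᵥ a) * (n ⬝ᵥ n) := by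
    rw [trace_add_smul_vecMulVec_mul_add_smul_vecMulVec hUsymm]
    linear_combination f * h2
  refine ⟨hdet, fun p q hchar => ?_⟩
  have hroots : (X - C 1) * (X - C p) * (X - C q)
      = (({1, p, q} : Multiset ℝ).map fun x => X - C x).prod := by
    simp [mul_assoc]
  have hpq : p * q = (U * U).det := by
    simpa [← hdet] using (det_eq_prod_of_charpoly_eq (hchar.trans hroots)).symm
  have hsum : 1 + p + q = (U * U).trace + (f ^ 2 - f) * (a ⬝ᵥ a) * (n ⬝ᵥ n) := by
    simpa [← htrace, add_assoc] using (trace_eq_sum_of_charpoly_eq (hchar.trans hroots)).symm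
  exact ⟨hpq, by linear_combination hsum - hpq⟩
end
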